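/- arXiv:2104.00981 — 4 statements merged into one kernel-verified Lean document; each statement's English description precedes it below -/
import Mathlib

section
/- Let A be an inquisitive algebra, i.e., a Heyting algebra H = ⟨A_c⟩ generated by a subset A_c that is closed under ∧, →, and contains 0, such that for all a ∈ A_c and x, y ∈ H, a → (x ∨ y) = (a → x) ∨ (a → y). Then every element x ∈ H can be written as a finite join x = a₀ ∨ ⋯ ∨ aₙ with each aᵢ ∈ A_c. -/
/-- Closure of a subset of a Heyting algebra under the operations ⊓, ⊔, ⇨ and ⊥. -/
inductive HeytGen {α : Type*} [HeytingAlgebra α] (C : Set α) : α → Prop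
  | base {a : α} : a ∈ C → HeytGen C a
  | bot : HeytGen C ⊥
  | inf {a b : α} : HeytGen C a → HeytGen C b → HeytGen C (a ⊓ b)
  | sup {a b : α} : HeytGen C a → HeytGen C b → HeytGen C (a ⊔ b)
  | himp {a b : α} : HeytGen C a → HeytGen C b → HeytGen C (a ⇨ b)

/-- Disjunctive normal form for inquisitive algebras: every element of the
Heyting algebra generated by the core is a finite join of core elements. -/
theorem inquisitive_normal_form {α : Type*} [HeytingAlgebra α] (C : Set α)
    (hbot : (⊥ : α) ∈ C)
    (hinf : ∀ a ∈ C, ∀ b ∈ C, a ⊓ b ∈ C)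
    (himp : ∀ a ∈ C, ∀ b ∈ C, a ⇨ b ∈ C)
    (hgen : ∀ x : α, HeytGen C x)
    (hsplit : ∀ a ∈ C, ∀ x y : α, a ⇨ (x ⊔ y) = (a ⇨ x) ⊔ (a ⇨ y)) :
    ∀ x : α, ∃ s : Finset α, s.Nonempty ∧ ↑s ⊆ C ∧ x = s.sup id := by
  classical
  set P : α → Prop := fun x => ∃ s : Finset α, s.Nonempty ∧ ↑s ⊆ C ∧ x = s.sup id with hP
  -- split over finite joins
  have split' : ∀ a ∈ C, ∀ t : Finset α, t.Nonempty →
      a ⇨ t.sup id = t.sup (fun b => a ⇨ b) := by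
    intro a ha t ht
    induction ht using Finset.Nonempty.cons_induction with
    | singleton b => simp
    | cons b s hb hs ih =>
      rw [Finset.sup_cons, Finset.sup_cons, hsplit a ha, ih]; rfl
  -- infimum closure
  have Pinf : ∀ x y, P x → P y → P (x ⊓ y) := by
    rintro x y ⟨s, hs, hsC, rfl⟩ ⟨t, ht, htC, rfl⟩
    refine ⟨(s ×ˢ t).image (fun p => p.1 ⊓ p.2), ?_, ?_, ?_⟩
    · exact (hs.product ht).image _
    · intro z hz
      simp only [Finset.coe_image, Set.mem_image, Finset.mem_coe, Finset.mem_product] at hz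
      obtain ⟨⟨a, b⟩, ⟨has, hbt⟩, rfl⟩ := hz
      exact hinf a (hsC has) b (htC hbt)
    · rw [Finset.sup_image, Finset.sup_inf_sup]
      rfl
  -- himp closure, left argument a single core element
  have Phimp1 : ∀ a ∈ C, ∀ y, P y → P (a ⇨ y) := by
    rintro a ha y ⟨t, ht, htC, rfl⟩
    refine ⟨t.image (fun b => a ⇨ b), ht.image _, ?_, ?_⟩
    · intro z hz
      simp only [Finset.coe_image, Set.mem_image, Finset.mem_coe] at hz
      obtain ⟨b, hbt, rfl⟩ := hz
      exact himp a ha b (htC hbt)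
    · rw [Finset.sup_image, split' a ha t ht]
      rfl
  -- himp closure
  have Phimp : ∀ x y, P x → P y → P (x ⇨ y) := by
    rintro x y ⟨s, hs, hsC, rfl⟩ hy
    induction hs using Finset.Nonempty.cons_induction with
    | singleton a =>
      simpa using Phimp1 a (hsC (by simp)) y hy
    | cons a s ha hs ih =>
      rw [Finset.sup_cons, sup_himp_distrib]
      have haC : a ∈ C := hsC (by simp)
      have hsC' : ↑s ⊆ C := fun z hz => hsC (by simp [hz])
      exact Pinf _ _ (Phimp1 a haC y hy) (ih hsC')
  intro x
  induction hgen x with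
  | base h => exact ⟨{_}, Finset.singleton_nonempty _, by simpa using h, by simp⟩
  | bot => exact ⟨{⊥}, Finset.singleton_nonempty _, by simpa using hbot, by simp⟩
  | inf _ _ iha ihb => exact Pinf _ _ iha ihb
  | sup _ _ iha ihb =>
    obtain ⟨s, hs, hsC, rfl⟩ := iha
    obtain ⟨t, ht, htC, rfl⟩ := ihb
    exact ⟨s ∪ t, hs.mono Finset.subset_union_left, by
      rw [Finset.coe_union]; exact Set.union_subset hsC htC, by rw [Finset.sup_union]⟩
  | himp _ _ iha ihb => exact Phimp _ _ iha ihb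
end

section
/- Let A be an inquisitive algebra whose generated Heyting algebra ⟨A_c⟩ is well-connected (x ∨ y = 1 implies x = 1 or y = 1). Then every core element a ∈ A_c is join-prime in ⟨A_c⟩: if a ≤ x ∨ y then a ≤ x or a ≤ y. -/
/-- In a well-connected inquisitive algebra, every core element is join-prime. -/
theorem core_joinPrime_of_wellConnected {α : Type*} [HeytingAlgebra α] (C : Set α)
    (hbot : (⊥ : α) ∈ C)
    (hinf : ∀ a ∈ C, ∀ b ∈ C, a ⊓ b ∈ C)
    (himp : ∀ a ∈ C, ∀ b ∈ C, a ⇨ b ∈ C)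
    (hgen : ∀ x : α, HeytGen C x)
    (hsplit : ∀ a ∈ C, ∀ x y : α, a ⇨ (x ⊔ y) = (a ⇨ x) ⊔ (a ⇨ y))
    (hwc : ∀ x y : α, x ⊔ y = ⊤ → x = ⊤ ∨ y = ⊤) :
    ∀ a ∈ C, ∀ x y : α, a ≤ x ⊔ y → a ≤ x ∨ a ≤ y := by
  intro a ha x y hle
  have h : (a ⇨ x) ⊔ (a ⇨ y) = ⊤ := by
    rw [← hsplit a ha x y, himp_eq_top_iff]; exact hle
  rcases hwc _ _ h with h' | h'
  · exact Or.inl (himp_eq_top_iff.mp h')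
  · exact Or.inr (himp_eq_top_iff.mp h')
end

section
/- Let A be a well-connected inquisitive algebra. Then the core A_c equals the set of join-irreducible elements of ⟨A_c⟩ provided the core satisfies the normal-form property (every element of ⟨A_c⟩ is a finite join of core elements). That is, A_c coincides with the join-irreducible (equivalently join-prime) elements of ⟨A_c⟩. -/
/-- In a well-connected inquisitive algebra satisfying the normal form property,
the core coincides with the set of join-irreducible elements. -/
theorem core_eq_joinIrreducibles {α : Type*} [HeytingAlgebra α] (C : Set α)
    (hbot : (⊥ : α) ∉ C)
    (hinf : ∀ a ∈ C, ∀ b ∈ C, a ⊓ b ∈ C)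
    (himp : ∀ a ∈ C, ∀ b ∈ C, a ⇨ b ∈ C)
    (hsplit : ∀ a ∈ C, ∀ x y : α, a ⇨ (x ⊔ y) = (a ⇨ x) ⊔ (a ⇨ y))
    (hwc : ∀ x y : α, x ⊔ y = ⊤ → x = ⊤ ∨ y = ⊤)
    (hnf : ∀ x : α, ∃ s : Finset α, ↑s ⊆ C ∧ x = s.sup id) :
    C = {x : α | x ≠ ⊥ ∧ ∀ a b : α, x = a ⊔ b → x = a ∨ x = b} := by
  ext c
  constructor
  · intro hc
    refine ⟨fun h => hbot (h ▸ hc), fun a b hab => ?_⟩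
    have h1 : c ⇨ (a ⊔ b) = ⊤ := by
      rw [← hab]; exact himp_self
    rw [hsplit c hc a b] at h1
    rcases hwc _ _ h1 with h | h
    · left
      exact le_antisymm (by rwa [← himp_eq_top_iff]) (hab ▸ le_sup_left)
    · right
      exact le_antisymm (by rwa [← himp_eq_top_iff]) (hab ▸ le_sup_right)
  · rintro ⟨hne, hirr⟩
    obtain ⟨s, hsC, hs⟩ := hnf c
    suffices h : ∃ a ∈ s, c = a by
      obtain ⟨a, ha, rfl⟩ := h
      exact hsC ha
    clear hsC
    classical
    induction s using Finset.induction_on with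
    | empty => exact absurd hs hne
    | @insert a s ha ih =>
      rw [Finset.sup_insert] at hs
      rcases hirr _ _ hs with h | h
      · exact ⟨a, Finset.mem_insert_self _ _, h⟩
      · obtain ⟨b, hb, hb'⟩ := ih h
        exact ⟨b, Finset.mem_insert_of_mem hb, hb'⟩
end

section
/- Let f : A → B be a surjective Heyting algebra homomorphism between core-generated dependence algebras. If f restricted to the cores is a Brouwerian semilattice homomorphism that preserves the tensor join on core elements, then f preserves the tensor on all elements: f(x ⊗ y) = f(x) ⊗ f(y) for all x, y, where x ⊗ y for arbitrary elements is determined via the normal form x = ⋁aᵢ, y = ⋁bⱼ (aᵢ, bⱼ core) and the distributivity law x ⊗ (y ∨ z) = (x ⊗ y) ∨ (x ⊗ z). -/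
/-- A surjective Heyting homomorphism between core-generated dependence algebras
whose restriction to the cores preserves the tensor join automatically preserves
the tensor on all elements. -/
theorem surjective_heyting_hom_preserves_tensor
    {α β : Type*} [HeytingAlgebra α] [HeytingAlgebra β]
    (tα : α → α → α) (tβ : β → β → β) (Cα : Set α) (Cβ : Set β)
    -- the cores are closed under the operations
    (hbotα : (⊥ : α) ∈ Cα)
    (hclosα : ∀ a ∈ Cα, ∀ b ∈ Cα, a ⊓ b ∈ Cα ∧ a ⇨ b ∈ Cα ∧ tα a b ∈ Cα)
    (hbotβ : (⊥ : β) ∈ Cβ)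
    (hclosβ : ∀ a ∈ Cβ, ∀ b ∈ Cβ, a ⊓ b ∈ Cβ ∧ a ⇨ b ∈ Cβ ∧ tβ a b ∈ Cβ)
    -- both algebras are core-generated (normal form)
    (hgenα : ∀ x : α, ∃ s : Finset α, s.Nonempty ∧ ↑s ⊆ Cα ∧ x = s.sup id)
    (hgenβ : ∀ x : β, ∃ s : Finset β, s.Nonempty ∧ ↑s ⊆ Cβ ∧ x = s.sup id)
    -- the tensor distributes over joins in both arguments
    (hdistα₁ : ∀ x y z : α, tα x (y ⊔ z) = tα x y ⊔ tα x z)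
    (hdistα₂ : ∀ x y z : α, tα (y ⊔ z) x = tα y x ⊔ tα z x)
    (hdistβ₁ : ∀ x y z : β, tβ x (y ⊔ z) = tβ x y ⊔ tβ x z)
    (hdistβ₂ : ∀ x y z : β, tβ (y ⊔ z) x = tβ y x ⊔ tβ z x)
    -- f is a surjective Heyting homomorphism
    (f : α → β) (hsurj : Function.Surjective f)
    (hinf : ∀ a b : α, f (a ⊓ b) = f a ⊓ f b)
    (hsup : ∀ a b : α, f (a ⊔ b) = f a ⊔ f b)
    (himp : ∀ a b : α, f (a ⇨ b) = f a ⇨ f b)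
    (hbot : f ⊥ = ⊥)
    -- f restricted to the cores preserves the tensor join
    (hcore : ∀ a ∈ Cα, f a ∈ Cβ)
    (htcore : ∀ a ∈ Cα, ∀ b ∈ Cα, f (tα a b) = tβ (f a) (f b)) :
    ∀ x y : α, f (tα x y) = tβ (f x) (f y) := by
  have key1 : ∀ a ∈ Cα, ∀ (t : Finset α) (h : t.Nonempty), ↑t ⊆ Cα →
      f (tα a (t.sup id)) = tβ (f a) (f (t.sup id)) := by
    intro a ha t h
    induction h using Finset.Nonempty.cons_induction with
    | singleton b =>
        intro hC
        simpa using htcore a ha b (hC (by simp))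
    | cons b t hb ht ih =>
        intro hC
        have hbC : b ∈ Cα := hC (by simp)
        have htC : ↑t ⊆ Cα := fun z hz => hC (by simp [hz])
        rw [Finset.sup_cons, hdistα₁, hsup, ih htC, hsup, hdistβ₁]
        simpa using congrArg (· ⊔ tβ (f a) (f (t.sup id))) (htcore a ha b hbC)
  have key2 : ∀ y ∈ Cα, ∀ (s : Finset α) (h : s.Nonempty), ↑s ⊆ Cα →
      f (tα (s.sup id) y) = tβ (f (s.sup id)) (f y) := by
    intro y hy s h
    induction h using Finset.Nonempty.cons_induction with
    | singleton b =>
        intro hC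
        simpa using htcore b (hC (by simp)) y hy
    | cons b s hb hs ih =>
        intro hC
        have hbC : b ∈ Cα := hC (by simp)
        have hsC : ↑s ⊆ Cα := fun z hz => hC (by simp [hz])
        rw [Finset.sup_cons, hdistα₂, hsup, ih hsC, hsup, hdistβ₂]
        simpa using congrArg (· ⊔ tβ (f (s.sup id)) (f y)) (htcore b hbC y hy)
  intro x y
  obtain ⟨s, hsne, hsC, rfl⟩ := hgenα x
  obtain ⟨t, htne, htC, rfl⟩ := hgenα y
  induction htne using Finset.Nonempty.cons_induction with
  | singleton b =>
      simpa using key2 b (htC (by simp)) s hsne hsC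
  | cons b t hb ht ih =>
      have hbC : b ∈ Cα := htC (by simp)
      have htC' : ↑t ⊆ Cα := fun z hz => htC (by simp [hz])
      rw [Finset.sup_cons, hdistα₁, hsup, ih htC', hsup, hdistβ₁]
      simpa using congrArg (· ⊔ tβ (f (s.sup id)) (f (t.sup id))) (key2 b hbC s hsne hsC)
end
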